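/- arXiv:1806.05270 — 4 statements merged into one kernel-verified Lean document; each statement's English description precedes it below -/
import Mathlib

section
/- Let H be a formal free power series such that the domain D_H = {F ∈ ℱ²_d : H·F ∈ ℱ²_d} is dense in ℱ²_d. Then there exist bounded left multipliers A and B of ℱ²_d such that: (i) A is left outer; (ii) B = H·A as formal power series; (iii) the column (A,B) is an isometric multiplier, i.e. ‖A·F‖² + ‖B·F‖² = ‖F‖² for every F ∈ ℱ²_d; and moreover D_H = {A·F : F ∈ ℱ²_d} and the graph {(F, H·F) : F ∈ D_H} equals {(A·F, B·F) : F ∈ ℱ²_d}. -/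
/-!
The graph `𝒢 = {(F, H·F) : F ∈ D_H}` of `T_H` is a closed subspace of `ℱ²_d ⊕ ℱ²_d`, invariant
under the right shifts `(F, G) ↦ (F·ξᵢ, G·ξᵢ)`, which are isometries with orthogonal ranges.
Comparing coefficients word by word shows that these shifts are pure on `𝒢`, so `𝒢` is the
orthogonal sum of the shifts `𝒲·ξ_w` of its wandering subspace `𝒲 = 𝒢 ⊖ ⨁ᵢ 𝒢·ξᵢ`. A vector of
`𝒲` whose first component has zero constant coefficient already lies in `⨁ᵢ 𝒢·ξᵢ`, so `𝒲` is
one-dimensional, and it is nonzero because `D_H` is dense. For a unit vector `(A, B) ∈ 𝒲` the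
vectors `(A·ξ_w, B·ξ_w)` form an orthonormal basis of `𝒢`, and expanding `F = ∑ F_w ξ_w` in it
shows that `F ↦ (A·F, B·F)` is a unitary from `ℱ²_d` onto `𝒢`; all the claims are read off
from this unitary.
-/


noncomputable section
open scoped ENNReal

namespace Smirnov

/-- Words in the letters `1,…,d`: the free monoid `𝔽⁺_d`. -/
abbrev Word (d : ℕ) := List (Fin d)

/-- The full Fock space `ℱ²_d = ℓ²(𝔽⁺_d)`. -/
abbrev Fock (d : ℕ) : Type := lp (fun _ : Word d => ℂ) 2

/-- The Cauchy product of formal free power series: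
`(H·F)_α = ∑_{βγ=α} H_β F_γ`. -/
def cauchy {d : ℕ} (H F : Word d → ℂ) : Word d → ℂ :=
  fun α => ∑ i ∈ Finset.range (α.length + 1), H (List.take i α) * F (List.drop i α)

/-- The standard basis formal power series `ξ_w`; `eWord []` is `ξ_∅`. -/
def eWord {d : ℕ} (w : Word d) : Word d → ℂ := fun α => if α = w then 1 else 0

/-- `H` is a bounded left multiplier of the Fock space: `H·F ∈ ℱ²_d` for every
`F ∈ ℱ²_d` and `F ↦ H·F` is bounded. -/
def IsBLM {d : ℕ} (H : Word d → ℂ) : Prop :=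
  (∀ F : Fock d, Memℓp (cauchy H (F : Word d → ℂ)) 2) ∧
  (∃ C : ℝ, ∀ F G : Fock d, (G : Word d → ℂ) = cauchy H (F : Word d → ℂ) → ‖G‖ ≤ C * ‖F‖)

/-- `A` is left outer: `A·ℱ²_d` is dense in `ℱ²_d`. -/
def IsLeftOuter {d : ℕ} (A : Word d → ℂ) : Prop :=
  Dense {G : Fock d | ∃ F : Fock d, (G : Word d → ℂ) = cauchy A (F : Word d → ℂ)}

/-- The domain `D_H = {F ∈ ℱ²_d : H·F ∈ ℱ²_d}` of left multiplication by `H`. -/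
def domH {d : ℕ} (H : Word d → ℂ) : Set (Fock d) :=
  {F : Fock d | Memℓp (cauchy H (F : Word d → ℂ)) 2}

section OrthogonalDecomposition

variable {𝕜 E ι : Type*} [RCLike 𝕜] [NormedAddCommGroup E] [InnerProductSpace 𝕜 E] [Fintype ι]

local notation "⟪" x ", " y "⟫" => @inner 𝕜 _ _ x y

theorem eq_sum_starProjection_of_orthogonal_inf {G : Submodule 𝕜 E} {M : ι → Submodule 𝕜 E}
    [∀ i, (M i).HasOrthogonalProjection] (hM : Pairwise fun i j => M i ⟂ M j)
    (hMG : ∀ i, M i ≤ G) {y : E} (hy : y ∈ G) (hyW : ∀ x ∈ G ⊓ ⨅ i, (M i)ᗮ, ⟪x, y⟫ = 0) :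
    y = ∑ i, (M i).starProjection y := by
  classical
  set r := y - ∑ i, (M i).starProjection y
  have hrM : ∀ j, r ∈ (M j)ᗮ := fun j => by
    rw [Submodule.mem_orthogonal]
    intro u hu
    rw [inner_sub_right, inner_sum, ← Finset.add_sum_erase _ _ (Finset.mem_univ j),
      Finset.sum_eq_zero fun i hi => (hM (Finset.ne_of_mem_erase hi).symm).inner_eq hu
        (Submodule.starProjection_apply_mem _ _), add_zero, ← inner_sub_right]
    exact Submodule.inner_right_of_mem_orthogonal hu
      (Submodule.sub_starProjection_mem_orthogonal y)
  have hrG : r ∈ G :=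
    G.sub_mem hy (G.sum_mem fun i _ => hMG i (Submodule.starProjection_apply_mem _ _))
  have hrW : r ∈ G ⊓ ⨅ i, (M i)ᗮ := Submodule.mem_inf.2 ⟨hrG, Submodule.mem_iInf _ |>.2 hrM⟩
  have hrr : ⟪r, r⟫ = 0 := by
    nth_rewrite 2 [show r = y - ∑ i, (M i).starProjection y from rfl]
    rw [inner_sub_right, inner_sum, hyW r hrW,
      Finset.sum_eq_zero fun i _ => Submodule.inner_left_of_mem_orthogonal
        (Submodule.starProjection_apply_mem _ _) (hrM i), sub_zero]
  exact sub_eq_zero.1 (inner_self_eq_zero.1 hrr)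

end OrthogonalDecomposition

variable {d : ℕ}

lemma eq_of_singleton_suffix_append_singleton {i j : Fin d} {w : Word d}
    (h : [j] <:+ w ++ [i]) : j = i := by
  obtain ⟨t, ht⟩ := h
  exact List.singleton_inj.1 (List.append_inj' ht rfl).2

section RightShift

variable {E : Type*}

/-- Right multiplication of a formal series by the monomial `ξ_w`. -/
def rightShift [Zero E] (w : Word d) (f : Word d → E) : Word d → E :=
  fun α => if w <:+ α then f (α.take (α.length - w.length)) else 0

/-- The adjoint of `rightShift [i]`. -/
def backShift (i : Fin d) (f : Word d → E) : Word d → E :=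
  fun β => f (β ++ [i])

section Zero

variable [Zero E]

@[simp]
lemma rightShift_append_apply (w β : Word d) (f : Word d → E) :
    rightShift w f (β ++ w) = f β := by
  simp [rightShift]

lemma rightShift_apply_of_not_suffix {w α : Word d} (f : Word d → E) (h : ¬ w <:+ α) :
    rightShift w f α = 0 :=
  if_neg h

lemma rightShift_apply_of_length_lt {w α : Word d} (f : Word d → E)
    (h : α.length < w.length) : rightShift w f α = 0 :=
  rightShift_apply_of_not_suffix f fun hs => (hs.length_le.trans_lt h).false

@[simp]
lemma rightShift_nil (f : Word d → E) : rightShift [] f = f := by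
  funext α
  simp [rightShift]

lemma rightShift_rightShift (w v : Word d) (f : Word d → E) :
    rightShift w (rightShift v f) = rightShift (v ++ w) f := by
  funext α
  by_cases hw : w <:+ α
  · obtain ⟨β, rfl⟩ := hw
    by_cases hv : v <:+ β
    · obtain ⟨γ, rfl⟩ := hv
      rw [rightShift_append_apply, rightShift_append_apply, List.append_assoc,
        rightShift_append_apply]
    · rw [rightShift_append_apply, rightShift_apply_of_not_suffix _ hv,
        rightShift_apply_of_not_suffix]
      rintro ⟨t, ht⟩
      exact hv ⟨t, List.append_cancel_right (by simpa using ht)⟩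
  · rw [rightShift_apply_of_not_suffix _ hw, rightShift_apply_of_not_suffix]
    exact fun h => hw ((List.suffix_append v w).trans h)

lemma rightShift_apply_eq_zero_of_ne {i j : Fin d} (hij : i ≠ j) (f : Word d → E)
    (γ : Word d) : rightShift [j] f (γ ++ [i]) = 0 :=
  rightShift_apply_of_not_suffix f fun h => hij (eq_of_singleton_suffix_append_singleton h).symm

lemma comp_rightShift {R : Type*} [Zero R] {φ : E → R} (hφ : φ 0 = 0) (w : Word d)
    (f : Word d → E) : (fun α => φ (rightShift w f α)) = rightShift w (φ ∘ f) := by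
  funext α
  by_cases h : w <:+ α <;> simp [rightShift, h, hφ]

end Zero

lemma rightShift_add [AddZeroClass E] (w : Word d) (f g : Word d → E) :
    rightShift w (f + g) = rightShift w f + rightShift w g := by
  funext α
  by_cases h : w <:+ α <;> simp [rightShift, h]

lemma rightShift_smul {R : Type*} [Zero E] [SMulZeroClass R E] (w : Word d) (c : R)
    (f : Word d → E) : rightShift w (c • f) = c • rightShift w f := by
  funext α
  by_cases h : w <:+ α <;> simp [rightShift, h]

lemma support_rightShift_subset [Zero E] (w : Word d) (f : Word d → E) :
    Function.support (rightShift w f) ⊆ Set.range (· ++ w) := by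
  intro α hα
  by_contra h
  exact hα (rightShift_apply_of_not_suffix f fun ⟨β, hβ⟩ => h ⟨β, hβ⟩)

section Sum

variable [AddCommMonoid E]

lemma sum_rightShift_singleton_apply_nil (g : Fin d → Word d → E) :
    (∑ j, rightShift [j] (g j)) [] = 0 := by
  simp [Finset.sum_apply, rightShift_apply_of_length_lt]

lemma sum_rightShift_singleton_apply_append (g : Fin d → Word d → E) (γ : Word d) (i : Fin d) :
    (∑ j, rightShift [j] (g j)) (γ ++ [i]) = g i γ := by
  rw [Finset.sum_apply, Finset.sum_eq_single i (fun j _ hji =>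
    rightShift_apply_eq_zero_of_ne hji.symm _ γ) (by simp), rightShift_append_apply]

lemma sum_rightShift_backShift {f : Word d → E} (hf : f [] = 0) :
    ∑ i, rightShift [i] (backShift i f) = f := by
  funext α
  rcases List.eq_nil_or_concat' α with rfl | ⟨γ, i, rfl⟩
  · rw [sum_rightShift_singleton_apply_nil, hf]
  · rw [sum_rightShift_singleton_apply_append, backShift]

end Sum

variable [AddCommMonoid E] [TopologicalSpace E]

lemma summable_rightShift_iff {w : Word d} {f : Word d → E} :
    Summable (rightShift w f) ↔ Summable f := by
  rw [← (List.append_left_injective w).summable_iff fun α hα =>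
    Function.notMem_support.1 fun h => hα (support_rightShift_subset w f h)]
  simp [Function.comp_def]

lemma tsum_rightShift (w : Word d) (f : Word d → E) :
    ∑' α, rightShift w f α = ∑' β, f β := by
  rw [← (List.append_left_injective w).tsum_eq (support_rightShift_subset w f)]
  simp

end RightShift

section Cauchy

lemma cauchy_add (H f g : Word d → ℂ) : cauchy H (f + g) = cauchy H f + cauchy H g := by
  funext α
  simp [cauchy, mul_add, Finset.sum_add_distrib]

lemma cauchy_smul (H : Word d → ℂ) (c : ℂ) (f : Word d → ℂ) :
    cauchy H (c • f) = c • cauchy H f := by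
  funext α
  simp [cauchy, Finset.mul_sum, mul_left_comm]

/-- Left multiplication by `H`, continuous for the topology of coefficientwise convergence. -/
def cauchyCLM (H : Word d → ℂ) : (Word d → ℂ) →L[ℂ] (Word d → ℂ) where
  toFun := cauchy H
  map_add' := cauchy_add H
  map_smul' := cauchy_smul H
  cont := continuous_pi fun _ => continuous_finsetSum _ fun _ _ =>
    continuous_const.mul (continuous_apply _)

@[simp]
lemma cauchyCLM_apply (H f : Word d → ℂ) : cauchyCLM H f = cauchy H f := rfl

lemma cauchy_rightShift (H : Word d → ℂ) (w : Word d) (f : Word d → ℂ) :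
    cauchy H (rightShift w f) = rightShift w (cauchy H f) := by
  funext α
  by_cases h : w <:+ α
  · obtain ⟨β, rfl⟩ := h
    rw [rightShift_append_apply, cauchy, List.length_append, add_right_comm,
      Finset.sum_range_add, cauchy]
    have htail : ∀ k ∈ Finset.range w.length, rightShift w f ((β ++ w).drop (β.length + 1 + k))
        = 0 := fun k hk => rightShift_apply_of_length_lt f <| by
      simp at hk ⊢; omega
    rw [Finset.sum_eq_zero (s := Finset.range w.length) fun k hk => by rw [htail k hk, mul_zero],
      add_zero]
    refine Finset.sum_congr rfl fun i hi => ?_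
    have hi : i ≤ β.length := Nat.lt_succ_iff.1 (Finset.mem_range.1 hi)
    rw [List.take_append_of_le_length hi, List.drop_append_of_le_length hi,
      rightShift_append_apply]
  · rw [rightShift_apply_of_not_suffix _ h]
    refine Finset.sum_eq_zero fun i _ => ?_
    rw [rightShift_apply_of_not_suffix _ fun hs => h (hs.trans (List.drop_suffix i α)), mul_zero]

lemma backShift_cauchy (H : Word d → ℂ) {f : Word d → ℂ} (hf : f [] = 0) (i : Fin d) :
    backShift i (cauchy H f) = cauchy H (backShift i f) := by
  funext β
  rw [backShift, cauchy, List.length_append, List.length_singleton, Finset.sum_range_succ,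
    List.drop_eq_nil_of_le (by simp), hf, mul_zero, add_zero, cauchy]
  refine Finset.sum_congr rfl fun k hk => ?_
  have hk : k ≤ β.length := Nat.lt_succ_iff.1 (Finset.mem_range.1 hk)
  rw [List.take_append_of_le_length hk, List.drop_append_of_le_length hk, backShift]

lemma hasSum_mul_rightShift (ψ F : Word d → ℂ) (α : Word d) :
    HasSum (fun w => F w * rightShift w ψ α) (cauchy ψ F α) := by
  have hsupp : ∀ w ∉ (Finset.range (α.length + 1)).image α.drop,
      F w * rightShift w ψ α = 0 := by
    intro w hw
    refine mul_eq_zero_of_right _ (rightShift_apply_of_not_suffix ψ ?_)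
    rintro ⟨β, rfl⟩
    exact hw (Finset.mem_image.2 ⟨β.length, by simp, by simp⟩)
  convert hasSum_sum_of_ne_finset_zero (L := SummationFilter.unconditional _) hsupp using 1
  rw [Finset.sum_image fun k hk l hl hkl => by
    have := congrArg List.length hkl
    simp at hk hl this; omega]
  refine Finset.sum_congr rfl fun k _ => ?_
  have h := rightShift_append_apply (α.drop k) (α.take k) ψ
  rw [List.take_append_drop] at h
  rw [h, mul_comm]

end Cauchy

section Fock

variable {E : Type*} [NormedAddCommGroup E]

lemma memℓp_rightShift {f : Word d → E} (hf : Memℓp f 2) (w : Word d) :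
    Memℓp (rightShift w f) 2 := by
  refine memℓp_gen ?_
  rw [comp_rightShift (φ := fun x : E => ‖x‖ ^ (2 : ℝ≥0∞).toReal) (by simp),
    summable_rightShift_iff]
  exact hf.summable (by simp)

lemma memℓp_backShift {f : Word d → E} (hf : Memℓp f 2) (i : Fin d) :
    Memℓp (backShift i f) 2 :=
  memℓp_gen ((hf.summable (by simp)).comp_injective (List.append_left_injective [i]))

def fockShift (w : Word d) : Fock d →ₗᵢ[ℂ] Fock d where
  toFun F := ⟨rightShift w F, memℓp_rightShift (lp.memℓp F) w⟩
  map_add' F G := lp.ext (rightShift_add w F G)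
  map_smul' c F := lp.ext (rightShift_smul w c F)
  norm_map' F := by
    have h2 : (0 : ℝ) < (2 : ℝ≥0∞).toReal := by simp
    simp only [LinearMap.coe_mk, AddHom.coe_mk, lp.norm_eq_tsum_rpow h2]
    rw [show (fun α => ‖rightShift w F α‖ ^ (2 : ℝ≥0∞).toReal) = _ from
      comp_rightShift (φ := fun x : ℂ => ‖x‖ ^ (2 : ℝ≥0∞).toReal) (by simp) w F,
      tsum_rightShift]
    rfl

@[simp]
lemma coe_fockShift (w : Word d) (F : Fock d) : ⇑(fockShift w F) = rightShift w F := rfl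

def fockBackShift (i : Fin d) (F : Fock d) : Fock d :=
  ⟨backShift i F, memℓp_backShift (lp.memℓp F) i⟩

@[simp]
lemma coe_fockBackShift (i : Fin d) (F : Fock d) : ⇑(fockBackShift i F) = backShift i F := rfl

end Fock

section Fock2

local notation "⟪" x ", " y "⟫" => @inner ℂ _ _ x y

abbrev Fock2 (d : ℕ) := WithLp 2 (Fock d × Fock d)

def pairShift (w : Word d) : Fock2 d →ₗᵢ[ℂ] Fock2 d :=
  (fockShift w).withLpProdMap 2 (fockShift w)

def pairCoeff : Fock2 d →ₗ[ℂ] (Word d → ℂ × ℂ) where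
  toFun x α := (x.fst α, x.snd α)
  map_add' _ _ := rfl
  map_smul' _ _ := rfl

@[simp]
lemma pairCoeff_apply (x : Fock2 d) (α : Word d) : pairCoeff x α = (x.fst α, x.snd α) := rfl

def pairBackShift (i : Fin d) (x : Fock2 d) : Fock2 d :=
  WithLp.toLp 2 (fockBackShift i x.fst, fockBackShift i x.snd)

lemma pairCoeff_injective : Function.Injective (pairCoeff (d := d)) := by
  intro x y h
  have h1 : x.fst = y.fst := lp.ext (funext fun α => congrArg Prod.fst (congrFun h α))
  have h2 : x.snd = y.snd := lp.ext (funext fun α => congrArg Prod.snd (congrFun h α))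
  exact WithLp.ofLp_injective 2 (Prod.ext h1 h2)

lemma pairCoeff_pairShift (w : Word d) (x : Fock2 d) :
    pairCoeff (pairShift w x) = rightShift w (pairCoeff x) := by
  funext α
  by_cases h : w <:+ α <;> simp [rightShift, pairShift, h]

lemma pairCoeff_pairBackShift (i : Fin d) (x : Fock2 d) :
    pairCoeff (pairBackShift i x) = backShift i (pairCoeff x) := rfl

@[simp]
lemma pairShift_nil (x : Fock2 d) : pairShift [] x = x :=
  pairCoeff_injective (by rw [pairCoeff_pairShift, rightShift_nil])

lemma pairShift_pairShift (w v : Word d) (x : Fock2 d) :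
    pairShift w (pairShift v x) = pairShift (v ++ w) x :=
  pairCoeff_injective (by simp only [pairCoeff_pairShift, rightShift_rightShift])

lemma inner_eq_zero_of_pairCoeff {x y : Fock2 d}
    (h : ∀ α, pairCoeff x α = 0 ∨ pairCoeff y α = 0) : ⟪x, y⟫ = 0 := by
  have hpt : ∀ α, (⟪x.fst α, y.fst α⟫ = 0) ∧ (⟪x.snd α, y.snd α⟫ = 0) := fun α => by
    rcases h α with h | h <;> simp only [pairCoeff_apply, Prod.mk_eq_zero] at h <;> simp [h]
  have h1 : ⟪x.fst, y.fst⟫ = 0 := by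
    rw [lp.inner_eq_tsum]; exact (tsum_congr fun α => (hpt α).1).trans tsum_zero
  have h2 : ⟪x.snd, y.snd⟫ = 0 := by
    rw [lp.inner_eq_tsum]; exact (tsum_congr fun α => (hpt α).2).trans tsum_zero
  rw [WithLp.prod_inner_apply, WithLp.ofLp_fst, WithLp.ofLp_snd, WithLp.ofLp_fst, WithLp.ofLp_snd,
    h1, h2, add_zero]

lemma inner_pairShift_pairShift_eq_zero {w v : Word d} (hwv : ¬ w <:+ v) (hvw : ¬ v <:+ w)
    (x y : Fock2 d) : ⟪pairShift w x, pairShift v y⟫ = 0 := by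
  refine inner_eq_zero_of_pairCoeff fun α => ?_
  simp only [pairCoeff_pairShift]
  by_cases hw : w <:+ α
  · refine .inr (rightShift_apply_of_not_suffix _ fun hv => ?_)
    rcases List.suffix_or_suffix_of_suffix hw hv with h | h
    exacts [hwv h, hvw h]
  · exact .inl (rightShift_apply_of_not_suffix _ hw)

end Fock2

section Graph

local notation "⟪" x ", " y "⟫" => @inner ℂ _ _ x y

def fockCoeffCLM : Fock d →L[ℂ] (Word d → ℂ) :=
  ContinuousLinearMap.pi fun α => lp.evalCLM ℂ (fun _ : Word d => ℂ) 2 α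

@[simp]
lemma fockCoeffCLM_apply (F : Fock d) : fockCoeffCLM F = ⇑F := rfl

/-- The graph `{(F, H·F) : F ∈ D_H}` of `T_H`. -/
def graph (H : Word d → ℂ) : Submodule ℂ (Fock2 d) :=
  LinearMap.ker ((fockCoeffCLM ∘L WithLp.sndL 2 ℂ (Fock d) (Fock d) -
    cauchyCLM H ∘L fockCoeffCLM ∘L WithLp.fstL 2 ℂ (Fock d) (Fock d) : Fock2 d →L[ℂ] _) :
      Fock2 d →ₗ[ℂ] Word d → ℂ)

variable {H : Word d → ℂ}

lemma mem_graph {x : Fock2 d} : x ∈ graph H ↔ ⇑x.snd = cauchy H ⇑x.fst := by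
  simp [graph, sub_eq_zero]

lemma isClosed_graph (H : Word d → ℂ) : IsClosed (graph H : Set (Fock2 d)) :=
  ContinuousLinearMap.isClosed_ker _

instance (H : Word d → ℂ) : CompleteSpace (graph H) :=
  (isClosed_graph H).completeSpace_coe

lemma pairShift_mem_graph (w : Word d) {x : Fock2 d} (hx : x ∈ graph H) :
    pairShift w x ∈ graph H := by
  rw [mem_graph] at hx ⊢
  simp [pairShift, cauchy_rightShift, hx]

lemma pairBackShift_mem_graph {x : Fock2 d} (hx : x ∈ graph H) (h0 : x.fst [] = 0)
    (i : Fin d) : pairBackShift i x ∈ graph H := by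
  rw [mem_graph] at hx ⊢
  simp [pairBackShift, ← backShift_cauchy H h0, hx]

def shiftedGraph (H : Word d → ℂ) (i : Fin d) : Submodule ℂ (Fock2 d) :=
  (graph H).map (pairShift [i]).toLinearMap

lemma shiftedGraph_le_graph (i : Fin d) : shiftedGraph H i ≤ graph H := by
  rintro _ ⟨x, hx, rfl⟩
  exact pairShift_mem_graph _ hx

instance (H : Word d → ℂ) (i : Fin d) : CompleteSpace (shiftedGraph H i) := by
  have h : (shiftedGraph H i : Set (Fock2 d)) = pairShift [i] '' graph H :=
    Submodule.map_coe _ _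
  refine IsComplete.completeSpace_coe ?_
  rw [h, isComplete_image_iff (pairShift [i]).isometry.isUniformInducing]
  exact (isClosed_graph H).isComplete

lemma shiftedGraph_isOrtho {i j : Fin d} (hij : i ≠ j) :
    shiftedGraph H i ⟂ shiftedGraph H j := by
  rw [Submodule.isOrtho_iff_inner_eq]
  rintro _ ⟨x, -, rfl⟩ _ ⟨y, -, rfl⟩
  have hne : ∀ {a b : Fin d}, a ≠ b → ¬ [a] <:+ [b] := fun hab h =>
    hab (eq_of_singleton_suffix_append_singleton (w := []) h)
  exact inner_pairShift_pairShift_eq_zero (hne hij) (hne (Ne.symm hij)) x y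

/-- The wandering subspace `𝒢 ⊖ ⨁ᵢ 𝒢·ξᵢ` of the graph `𝒢`. -/
def wandering (H : Word d → ℂ) : Submodule ℂ (Fock2 d) :=
  graph H ⊓ ⨅ i, (shiftedGraph H i)ᗮ

end Graph

section Wold

local notation "⟪" x ", " y "⟫" => @inner ℂ _ _ x y

variable {H : Word d → ℂ}

lemma exists_eq_sum_pairShift {y : Fock2 d} (hy : y ∈ graph H)
    (hyW : ∀ x ∈ wandering H, ⟪x, y⟫ = 0) :
    ∃ g : Fin d → Fock2 d, (∀ i, g i ∈ graph H) ∧ y = ∑ i, pairShift [i] (g i) := by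
  have hsum := eq_sum_starProjection_of_orthogonal_inf (fun _ _ => shiftedGraph_isOrtho)
    shiftedGraph_le_graph hy hyW
  choose g hg hgy using fun i =>
    Submodule.mem_map.1 ((shiftedGraph H i).starProjection_apply_mem y)
  exact ⟨g, hg, hsum.trans (Finset.sum_congr rfl fun i _ => (hgy i).symm)⟩

lemma inner_pairShift_append_sum_pairShift (w : Word d) (i : Fin d) (x : Fock2 d)
    (g : Fin d → Fock2 d) :
    ⟪pairShift (w ++ [i]) x, ∑ j, pairShift [j] (g j)⟫ = ⟪pairShift w x, g i⟫ := by
  rw [inner_sum, Finset.sum_eq_single i, ← pairShift_pairShift, LinearIsometry.inner_map_map]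
  · intro j _ hji
    refine inner_pairShift_pairShift_eq_zero (fun h => hji ?_) (fun h => hji ?_) _ _
    · exact (eq_of_singleton_suffix_append_singleton (w := [])
        ((List.suffix_append w [i]).trans h)).symm
    · exact eq_of_singleton_suffix_append_singleton h
  · simp

/-- Purity of the shift on the graph: each use of `exists_eq_sum_pairShift` peels one letter off
the words carrying nonzero coefficients. -/
lemma pairCoeff_eq_zero_of_orthogonal (n : ℕ) {y : Fock2 d} (hy : y ∈ graph H)
    (horth : ∀ w, ∀ x ∈ wandering H, ⟪pairShift w x, y⟫ = 0) {α : Word d}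
    (hα : α.length < n) : pairCoeff y α = 0 := by
  induction n generalizing y α with
  | zero => exact absurd hα (Nat.not_lt_zero _)
  | succ n ih =>
    obtain ⟨g, hg, rfl⟩ := exists_eq_sum_pairShift hy fun x hx => by
      simpa using horth [] x hx
    have hcoeff : pairCoeff (∑ j, pairShift [j] (g j)) =
        ∑ j, rightShift [j] (pairCoeff (g j)) := by
      simp only [map_sum, pairCoeff_pairShift]
    rcases List.eq_nil_or_concat' α with rfl | ⟨γ, i, rfl⟩
    · rw [hcoeff, sum_rightShift_singleton_apply_nil]
    · rw [hcoeff, sum_rightShift_singleton_apply_append]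
      refine ih (hg i) (fun w x hx => ?_) (by simpa using hα)
      rw [← inner_pairShift_append_sum_pairShift]
      exact horth _ x hx

theorem eq_zero_of_orthogonal_pairShift_wandering {y : Fock2 d} (hy : y ∈ graph H)
    (horth : ∀ w, ∀ x ∈ wandering H, ⟪pairShift w x, y⟫ = 0) : y = 0 :=
  pairCoeff_injective <| by
    rw [map_zero]
    exact funext fun α => pairCoeff_eq_zero_of_orthogonal _ hy horth (Nat.lt_succ_self _)

lemma eq_zero_of_mem_wandering {x : Fock2 d} (hx : x ∈ wandering H) (h0 : x.fst [] = 0) :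
    x = 0 := by
  obtain ⟨hxG, hxM⟩ := Submodule.mem_inf.1 hx
  have hnil : pairCoeff x [] = 0 := by
    simp [h0, mem_graph.1 hxG, cauchy]
  have hsum : ∑ i, pairShift [i] (pairBackShift i x) = x := pairCoeff_injective <| by
    simp only [map_sum, pairCoeff_pairShift, pairCoeff_pairBackShift,
      sum_rightShift_backShift hnil]
  refine inner_self_eq_zero (𝕜 := ℂ) |>.1 ?_
  nth_rewrite 1 [← hsum]
  rw [sum_inner]
  exact Finset.sum_eq_zero fun i _ => Submodule.inner_right_of_mem_orthogonal
    (Submodule.mem_map_of_mem (f := (pairShift [i]).toLinearMap)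
      (pairBackShift_mem_graph hxG h0 i)) (Submodule.mem_iInf _ |>.1 hxM i)

end Wold

section WanderingBasis

local notation "⟪" x ", " y "⟫" => @inner ℂ _ _ x y

variable {H : Word d → ℂ} {x₀ : Fock2 d}

lemma exists_norm_eq_one_mem_wandering (hG : graph H ≠ ⊥) :
    ∃ x₀ ∈ wandering H, ‖x₀‖ = 1 := by
  have hW : wandering H ≠ ⊥ := by
    intro hW
    refine hG ((Submodule.eq_bot_iff _).2 fun y hy =>
      eq_zero_of_orthogonal_pairShift_wandering hy fun w x hx => ?_)
    rw [hW, Submodule.mem_bot] at hx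
    simp [hx]
  obtain ⟨x, hx, hx0⟩ := Submodule.exists_mem_ne_zero_of_ne_bot hW
  exact ⟨(‖x‖⁻¹ : ℂ) • x, Submodule.smul_mem _ _ hx, norm_smul_inv_norm hx0⟩

lemma fst_nil_ne_zero_of_mem_wandering (hx₀ : x₀ ∈ wandering H) (hn : ‖x₀‖ = 1) :
    x₀.fst [] ≠ 0 := fun h0 => by
  simp [eq_zero_of_mem_wandering hx₀ h0] at hn

lemma eq_smul_of_mem_wandering (hx₀ : x₀ ∈ wandering H) (h0 : x₀.fst [] ≠ 0) {x : Fock2 d}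
    (hx : x ∈ wandering H) : x = (x.fst [] / x₀.fst []) • x₀ := by
  refine sub_eq_zero.1 (eq_zero_of_mem_wandering (sub_mem hx (Submodule.smul_mem _ _ hx₀)) ?_)
  change x.fst [] - (x.fst [] / x₀.fst []) * x₀.fst [] = 0
  rw [div_mul_cancel₀ _ h0, sub_self]

lemma inner_pairShift_pairShift_append (hx₀ : x₀ ∈ wandering H) (w : Word d) {t : Word d}
    (ht : t ≠ []) : ⟪pairShift w x₀, pairShift (t ++ w) x₀⟫ = 0 := by
  obtain ⟨hx₀G, hx₀M⟩ := Submodule.mem_inf.1 hx₀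
  obtain ⟨t, i, rfl⟩ := (List.eq_nil_or_concat' t).resolve_left ht
  rw [← pairShift_pairShift, LinearIsometry.inner_map_map, ← pairShift_pairShift]
  exact Submodule.inner_left_of_mem_orthogonal (Submodule.mem_map_of_mem
    (f := (pairShift [i]).toLinearMap) (pairShift_mem_graph t hx₀G))
    (Submodule.mem_iInf _ |>.1 hx₀M i)

lemma orthonormal_pairShift (hx₀ : x₀ ∈ wandering H) (hn : ‖x₀‖ = 1) :
    Orthonormal ℂ fun w : Word d => pairShift w x₀ := by
  rw [orthonormal_iff_ite]
  intro w u
  split_ifs with hwu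
  · rw [hwu, inner_self_eq_norm_sq_to_K, LinearIsometry.norm_map, hn]
    simp
  by_cases hsuf : w <:+ u
  · obtain ⟨t, rfl⟩ := hsuf
    exact inner_pairShift_pairShift_append hx₀ w fun ht => hwu (by simp [ht])
  by_cases hsuf' : u <:+ w
  · obtain ⟨t, rfl⟩ := hsuf'
    exact inner_eq_zero_symm.1
      (inner_pairShift_pairShift_append hx₀ u fun ht => hwu (by simp [ht]))
  exact inner_pairShift_pairShift_eq_zero hsuf hsuf' x₀ x₀

def graphShifts (hx₀ : x₀ ∈ wandering H) (w : Word d) : graph H :=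
  ⟨pairShift w x₀, pairShift_mem_graph w (Submodule.mem_inf.1 hx₀).1⟩

lemma orthogonal_span_graphShifts_eq_bot (hx₀ : x₀ ∈ wandering H) (h0 : x₀.fst [] ≠ 0) :
    (Submodule.span ℂ (Set.range (graphShifts hx₀)))ᗮ = ⊥ := by
  refine (Submodule.eq_bot_iff _).2 fun y hy => Subtype.ext ?_
  have hy0 : ∀ w, ⟪graphShifts hx₀ w, y⟫ = 0 := fun w =>
    Submodule.inner_right_of_mem_orthogonal (Submodule.subset_span (Set.mem_range_self w)) hy
  refine eq_zero_of_orthogonal_pairShift_wandering y.2 fun w x hx => ?_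
  rw [eq_smul_of_mem_wandering hx₀ h0 hx, map_smul, inner_smul_left]
  exact mul_eq_zero_of_right _ (hy0 w)

def wanderingBasis (hx₀ : x₀ ∈ wandering H) (hn : ‖x₀‖ = 1) :
    HilbertBasis (Word d) ℂ (graph H) :=
  HilbertBasis.mkOfOrthogonalEqBot
    (((graph H).subtypeₗᵢ.orthonormal_comp_iff (v := graphShifts hx₀)).1
      (orthonormal_pairShift hx₀ hn))
    (orthogonal_span_graphShifts_eq_bot hx₀ (fst_nil_ne_zero_of_mem_wandering hx₀ hn))

lemma coe_wanderingBasis (hx₀ : x₀ ∈ wandering H) (hn : ‖x₀‖ = 1) (w : Word d) :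
    (wanderingBasis hx₀ hn w : Fock2 d) = pairShift w x₀ := by
  simp [wanderingBasis, graphShifts]

/-- Expanding `F` in the basis `(x₀·ξ_w)_w` multiplies each coordinate of `x₀` by `F`. -/
lemma apply_wanderingBasis_repr_symm (hx₀ : x₀ ∈ wandering H) (hn : ‖x₀‖ = 1)
    (φ : Fock2 d →L[ℂ] ℂ) (ψ : Word d → ℂ) (α : Word d)
    (hφ : ∀ w, φ (pairShift w x₀) = rightShift w ψ α) (F : Fock d) :
    φ ((wanderingBasis hx₀ hn).repr.symm F) = cauchy ψ F α := by
  have h := ((wanderingBasis hx₀ hn).hasSum_repr_symm F).mapL (φ ∘L (graph H).subtypeL)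
  simp only [ContinuousLinearMap.comp_apply, map_smul, Submodule.subtypeL_apply,
    coe_wanderingBasis, hφ, smul_eq_mul] at h
  exact h.unique (hasSum_mul_rightShift ψ F α)

end WanderingBasis

section Parametrization

variable {H A B : Word d → ℂ} {U : Fock d ≃ₗᵢ[ℂ] graph H}

lemma exists_ne_zero_mem_domH (hdense : Dense (domH H)) : ∃ F ∈ domH H, F ≠ 0 := by
  have hne : (lp.single 2 [] 1 : Fock d) ≠ 0 := fun h => by
    simpa [lp.single_apply_self] using congrArg (fun G : Fock d => G []) h
  exact hdense.exists_mem_open isClosed_singleton.isOpen_compl ⟨_, hne⟩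

lemma graph_ne_bot_of_dense (hdense : Dense (domH H)) : graph H ≠ ⊥ := by
  obtain ⟨F, hF, hF0⟩ := exists_ne_zero_mem_domH hdense
  refine (Submodule.ne_bot_iff _).2
    ⟨WithLp.toLp 2 (F, ⟨cauchy H F, hF⟩), mem_graph.2 rfl, fun h => hF0 ?_⟩
  exact congrArg WithLp.fst h

/-- `(A, B)` is a unit vector of the (one-dimensional) wandering subspace. -/
theorem exists_linearIsometryEquiv_graph (hG : graph H ≠ ⊥) :
    ∃ A B : Word d → ℂ, B = cauchy H A ∧ ∃ U : Fock d ≃ₗᵢ[ℂ] graph H, ∀ F : Fock d,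
      ⇑(U F : Fock2 d).fst = cauchy A F ∧ ⇑(U F : Fock2 d).snd = cauchy B F := by
  obtain ⟨x₀, hx₀, hn⟩ := exists_norm_eq_one_mem_wandering hG
  refine ⟨x₀.fst, x₀.snd, mem_graph.1 (Submodule.mem_inf.1 hx₀).1,
    (wanderingBasis hx₀ hn).repr.symm, fun F => ⟨funext fun α => ?_, funext fun α => ?_⟩⟩
  · exact apply_wanderingBasis_repr_symm hx₀ hn
      (lp.evalCLM ℂ _ 2 α ∘L WithLp.fstL 2 ℂ _ _) _ α (fun w => rfl) F
  · exact apply_wanderingBasis_repr_symm hx₀ hn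
      (lp.evalCLM ℂ _ 2 α ∘L WithLp.sndL 2 ℂ _ _) _ α (fun w => rfl) F

lemma isBLM_of_forall_exists_norm_le (h : ∀ F : Fock d, ∃ G : Fock d, ⇑G = cauchy A F ∧ ‖G‖ ≤ ‖F‖) :
    IsBLM A := by
  refine ⟨fun F => ?_, 1, fun F G' hG' => ?_⟩
  · obtain ⟨G, hG, -⟩ := h F
    exact hG ▸ lp.memℓp G
  · obtain ⟨G, hG, hle⟩ := h F
    rw [one_mul, lp.ext (hG'.trans hG.symm)]
    exact hle

lemma isBLM_of_fst (hU : ∀ F, ⇑(U F : Fock2 d).fst = cauchy A F) :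
    IsBLM A :=
  isBLM_of_forall_exists_norm_le fun F =>
    ⟨_, hU F, (WithLp.norm_fst_le (x := (U F : Fock2 d))).trans (U.norm_map F).le⟩

lemma isBLM_of_snd (hU : ∀ F, ⇑(U F : Fock2 d).snd = cauchy B F) :
    IsBLM B :=
  isBLM_of_forall_exists_norm_le fun F =>
    ⟨_, hU F, (WithLp.norm_snd_le (x := (U F : Fock2 d))).trans (U.norm_map F).le⟩

lemma norm_sq_add_norm_sq_eq
    (hU : ∀ F, ⇑(U F : Fock2 d).fst = cauchy A F ∧ ⇑(U F : Fock2 d).snd = cauchy B F)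
    {F GA GB : Fock d} (hGA : ⇑GA = cauchy A F) (hGB : ⇑GB = cauchy B F) :
    ‖GA‖ ^ 2 + ‖GB‖ ^ 2 = ‖F‖ ^ 2 := by
  rw [lp.ext (hGA.trans (hU F).1.symm), lp.ext (hGB.trans (hU F).2.symm),
    ← WithLp.prod_norm_sq_eq_of_L2]
  exact congrArg (· ^ 2) (U.norm_map F)

lemma mem_graph_iff_exists
    (hU : ∀ F, ⇑(U F : Fock2 d).fst = cauchy A F ∧ ⇑(U F : Fock2 d).snd = cauchy B F)
    (p : Fock d × Fock d) :
    ⇑p.2 = cauchy H p.1 ↔ ∃ F : Fock d, ⇑p.1 = cauchy A F ∧ ⇑p.2 = cauchy B F := by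
  refine ⟨fun hp => ⟨U.symm ⟨WithLp.toLp 2 p, mem_graph.2 hp⟩, ?_⟩, ?_⟩
  · simpa using hU (U.symm ⟨WithLp.toLp 2 p, mem_graph.2 hp⟩)
  · rintro ⟨F, h1, h2⟩
    rw [h1.trans (hU F).1.symm, h2.trans (hU F).2.symm]
    exact mem_graph.1 (U F).2

lemma domH_eq_range (hUA : ∀ F, ⇑(U F : Fock2 d).fst = cauchy A F) :
    domH H = {G : Fock d | ∃ F : Fock d, ⇑G = cauchy A F} := by
  ext G
  refine ⟨fun hG => ⟨U.symm ⟨WithLp.toLp 2 (G, ⟨cauchy H G, hG⟩), mem_graph.2 rfl⟩, ?_⟩,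
    fun ⟨F, hF⟩ => ?_⟩
  · simpa using hUA (U.symm ⟨WithLp.toLp 2 (G, ⟨cauchy H G, hG⟩), mem_graph.2 rfl⟩)
  · change Memℓp (cauchy H G) 2
    rw [hF.trans (hUA F).symm, ← mem_graph.1 (U F).2]
    exact lp.memℓp _

end Parametrization

theorem statement0_general {d : ℕ} (H : Word d → ℂ)
    (hdense : Dense (domH H)) :
    ∃ A B : Word d → ℂ,
      IsBLM A ∧ IsBLM B ∧
      -- (i) A is left outer
      IsLeftOuter A ∧
      -- (ii) B = H·A as formal power series
      B = cauchy H A ∧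
      -- (iii) the column (A,B) is an isometric multiplier
      (∀ (F GA GB : Fock d),
        (GA : Word d → ℂ) = cauchy A (F : Word d → ℂ) →
        (GB : Word d → ℂ) = cauchy B (F : Word d → ℂ) →
        ‖GA‖ ^ 2 + ‖GB‖ ^ 2 = ‖F‖ ^ 2) ∧
      -- D_H = {A·F : F ∈ ℱ²_d}
      domH H = {G : Fock d | ∃ F : Fock d, (G : Word d → ℂ) = cauchy A (F : Word d → ℂ)} ∧
      -- graph of T_H = {(A·F, B·F) : F ∈ ℱ²_d}
      {p : Fock d × Fock d | (p.2 : Word d → ℂ) = cauchy H (p.1 : Word d → ℂ)} =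
        {p : Fock d × Fock d | ∃ F : Fock d,
          (p.1 : Word d → ℂ) = cauchy A (F : Word d → ℂ) ∧
          (p.2 : Word d → ℂ) = cauchy B (F : Word d → ℂ)} := by
  obtain ⟨A, B, hBA, U, hU⟩ := exists_linearIsometryEquiv_graph (graph_ne_bot_of_dense hdense)
  have hdom := domH_eq_range fun F => (hU F).1
  refine ⟨A, B, isBLM_of_fst fun F => (hU F).1, isBLM_of_snd fun F => (hU F).2, ?_, hBA,
    fun F GA GB => norm_sq_add_norm_sq_eq hU, hdom, Set.ext (mem_graph_iff_exists hU)⟩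
  rw [IsLeftOuter, ← hdom]
  exact hdense

/-- If `H` is a formal free power series whose domain
`D_H = {F ∈ ℱ²_d : H·F ∈ ℱ²_d}` is dense in `ℱ²_d`, then there are bounded left
multipliers `A, B` with `A` left outer, `B = H·A`, the column `(A,B)` isometric,
`D_H = A·ℱ²_d`, and the graph of `T_H` equal to `{(A·F, B·F) : F ∈ ℱ²_d}`. -/
theorem statement0 {d : ℕ} (hd : 0 < d) (H : Word d → ℂ)
    (hdense : Dense (domH H)) :
    ∃ A B : Word d → ℂ,
      IsBLM A ∧ IsBLM B ∧
      -- (i) A is left outer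
      IsLeftOuter A ∧
      -- (ii) B = H·A as formal power series
      B = cauchy H A ∧
      -- (iii) the column (A,B) is an isometric multiplier
      (∀ (F GA GB : Fock d),
        (GA : Word d → ℂ) = cauchy A (F : Word d → ℂ) →
        (GB : Word d → ℂ) = cauchy B (F : Word d → ℂ) →
        ‖GA‖ ^ 2 + ‖GB‖ ^ 2 = ‖F‖ ^ 2) ∧
      -- D_H = {A·F : F ∈ ℱ²_d}
      domH H = {G : Fock d | ∃ F : Fock d, (G : Word d → ℂ) = cauchy A (F : Word d → ℂ)} ∧
      -- graph of T_H = {(A·F, B·F) : F ∈ ℱ²_d}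
      {p : Fock d × Fock d | (p.2 : Word d → ℂ) = cauchy H (p.1 : Word d → ℂ)} =
        {p : Fock d × Fock d | ∃ F : Fock d,
          (p.1 : Word d → ℂ) = cauchy A (F : Word d → ℂ) ∧
          (p.2 : Word d → ℂ) = cauchy B (F : Word d → ℂ)} :=
  statement0_general H hdense

end Smirnov
end
end

section
/- Suppose A and B are bounded left multipliers of ℱ²_d with A left outer, and H is a formal free power series with H·A = B (Cauchy product of formal series). Then A·ℱ²_d ⊆ D_H = {F ∈ ℱ²_d : H·F ∈ ℱ²_d}, with H·(A·F) = B·F for every F ∈ ℱ²_d; in particular D_H is dense in ℱ²_d. -/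
noncomputable section
open scoped ENNReal

namespace Smirnov

/-!
Formal Cauchy multiplication is associative, so `H·(A·F) = (H·A)·F = B·F`, which lies in `ℱ²_d`
because `B` is a bounded left multiplier. Hence `D_H` contains the range `A·ℱ²_d`, which is dense
because `A` is left outer.
-/

theorem cauchy_assoc {d : ℕ} (H A F : Word d → ℂ) :
    cauchy H (cauchy A F) = cauchy (cauchy H A) F := by
  funext α
  simp only [cauchy, Finset.mul_sum, Finset.sum_mul, List.length_drop, List.drop_drop]
  set n := α.length
  -- Both sides sum over splittings `α = β γ δ`, grouped by `|β|` on the left, by `|β γ|` on the right.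
  set f : ℕ → ℕ → ℂ := fun i j => H (α.take i) * (A ((α.drop i).take j) * F (α.drop (i + j)))
  calc ∑ i ∈ Finset.range (n + 1), ∑ j ∈ Finset.range (n - i + 1), f i j
      = ∑ i ∈ Finset.range (n + 1), ∑ j ∈ Finset.range (n + 1 - i), f i j :=
        Finset.sum_congr rfl fun i hi => by
          rw [Nat.sub_add_comm (Nat.lt_succ_iff.mp (Finset.mem_range.mp hi))]
    _ = ∑ k ∈ Finset.range (n + 1), ∑ i ∈ Finset.range (k + 1), f i (k - i) :=
        (Finset.sum_range_diag_flip _ _).symm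
    _ = _ := by
      refine Finset.sum_congr rfl fun k hk => ?_
      have hk : k ≤ n := Nat.lt_succ_iff.mp (Finset.mem_range.mp hk)
      rw [List.length_take_of_le hk]
      refine Finset.sum_congr rfl fun i hi => ?_
      have hi : i ≤ k := Nat.lt_succ_iff.mp (Finset.mem_range.mp hi)
      simp only [f]
      rw [Nat.add_sub_cancel' hi, List.take_take, min_eq_left hi, List.drop_take, mul_assoc]

theorem statement2_general {d : ℕ} (A B H : Word d → ℂ)
    (hB : IsBLM B) (houtA : IsLeftOuter A)
    (hHA : cauchy H A = B) :
    (∀ F G : Fock d, (G : Word d → ℂ) = cauchy A (F : Word d → ℂ) →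
      G ∈ domH H ∧ cauchy H (G : Word d → ℂ) = cauchy B (F : Word d → ℂ)) ∧
    Dense (domH H) := by
  have hrange : ∀ F G : Fock d, (G : Word d → ℂ) = cauchy A (F : Word d → ℂ) →
      G ∈ domH H ∧ cauchy H (G : Word d → ℂ) = cauchy B (F : Word d → ℂ) := by
    intro F G hG
    have hHG : cauchy H (G : Word d → ℂ) = cauchy B (F : Word d → ℂ) := by
      rw [hG, cauchy_assoc, hHA]
    exact ⟨show Memℓp _ 2 from hHG ▸ hB.1 F, hHG⟩
  refine ⟨hrange, houtA.mono ?_⟩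
  rintro G ⟨F, hF⟩
  exact (hrange F G hF).1

/-- If `A, B` are bounded left multipliers with `A` left outer
and `H·A = B` as formal power series, then `A·ℱ²_d ⊆ D_H`, with
`H·(A·F) = B·F` for every `F ∈ ℱ²_d`; in particular `D_H` is dense. -/
theorem statement2 {d : ℕ} (hd : 0 < d) (A B H : Word d → ℂ)
    (hA : IsBLM A) (hB : IsBLM B) (houtA : IsLeftOuter A)
    (hHA : cauchy H A = B) :
    (∀ F G : Fock d, (G : Word d → ℂ) = cauchy A (F : Word d → ℂ) →
      G ∈ domH H ∧ cauchy H (G : Word d → ℂ) = cauchy B (F : Word d → ℂ)) ∧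
    Dense (domH H) :=
  statement2_general A B H hB houtA hHA

end Smirnov
end
end

section
/- Let A be a bounded left multiplier of ℱ²_d which is left outer. Then for every positive integer n and every d-tuple X = (X₁,…,X_d) of n×n complex matrices with ‖Σ_{j=1}^d X_j X_j*‖ < 1, the matrix A(X) = Σ_{k≥0} Σ_{|α|=k} a_α X^α (which converges absolutely in operator norm) is invertible in the n×n matrices. -/
/-!
Evaluation at `X` is bounded on `ℱ²_d`: by Cauchy–Schwarz, the degree-`k` part of `G(X)` has
norm at most `‖G‖ ρᵏ`, where `ρ = ‖∑ X_j X_j*‖^{1/2} < 1`, so `‖G(X)‖ ≤ ‖G‖ / (1 - ρ)`; and it is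
multiplicative on Cauchy products. As `A·ℱ²_d` is dense, some `A·F` lies within `1 - ρ` of the
vacuum `ξ_∅`, whence `A(X) F(X) = (A·F)(X)` lies within distance `1` of `ξ_∅(X) = I` and is
invertible. So `A(X)` has a right inverse, which for matrices makes it invertible. The series
for `A(X)` converges because `A = A·ξ_∅ ∈ ℱ²_d`.
-/

noncomputable section
open scoped ENNReal

namespace Smirnov

def wordOp {d n : ℕ}
    (X : Fin d → (EuclideanSpace ℂ (Fin n) →L[ℂ] EuclideanSpace ℂ (Fin n)))
    (α : Word d) : EuclideanSpace ℂ (Fin n) →L[ℂ] EuclideanSpace ℂ (Fin n) :=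
  (α.map X).prod

instance {R M : Type*} [Semiring R] [TopologicalSpace M] [AddCommMonoid M] [Module R M]
    [ContinuousAdd M] [IsDedekindFiniteMonoid (Module.End R M)] :
    IsDedekindFiniteMonoid (M →L[R] M) :=
  .of_injective ContinuousLinearMap.toLinearMapRingHom ContinuousLinearMap.coe_injective

def vacuum (d : ℕ) : Fock d := lp.single 2 [] 1

lemma coe_vacuum (d : ℕ) : ⇑(vacuum d) = eWord [] := by
  funext w
  simp [vacuum, lp.single_apply, eWord, Pi.single_apply]

lemma cauchy_eWord_nil {d : ℕ} (A : Word d → ℂ) : cauchy A (eWord []) = A := by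
  funext α
  rw [cauchy, Finset.sum_eq_single_of_mem α.length (Finset.self_mem_range_succ _)]
  · simp [eWord]
  · intro i hi hne
    have : List.drop i α ≠ [] := by
      rw [Ne, List.drop_eq_nil_iff]
      have := Finset.mem_range.mp hi
      omega
    simp [eWord, this]

lemma sum_norm_sq_ofFn_le_norm_sq {d : ℕ} (G : Fock d) (k : ℕ) :
    ∑ f : Fin k → Fin d, ‖G (List.ofFn f)‖ ^ 2 ≤ ‖G‖ ^ 2 := by
  have h := lp.sum_rpow_le_norm_rpow (by norm_num) G
    (Finset.univ.image fun f : Fin k → Fin d => List.ofFn f)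
  rw [Finset.sum_image fun f _ g _ h => List.ofFn_injective h] at h
  simpa using h

section Evaluation

open ContinuousLinearMap (adjoint)

variable {d n : ℕ} (X : Fin d → (EuclideanSpace ℂ (Fin n) →L[ℂ] EuclideanSpace ℂ (Fin n)))

local notation "E" => EuclideanSpace ℂ (Fin n)

/-- The norm of the row operator `[X₁ ⋯ X_d] : Eᵈ → E`. -/
def rowNorm : ℝ := √‖∑ j, X j * adjoint (X j)‖

lemma rowNorm_nonneg : 0 ≤ rowNorm X := Real.sqrt_nonneg _

lemma rowNorm_lt_one (hX : ‖∑ j, X j * adjoint (X j)‖ < 1) : rowNorm X < 1 :=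
  (Real.sqrt_lt' one_pos).2 (by rwa [one_pow])

def homPart (G : Word d → ℂ) (k : ℕ) : E →L[ℂ] E :=
  ∑ f : Fin k → Fin d, G (List.ofFn f) • wordOp X (List.ofFn f)

/-- `G(X)`; as a `tsum` it is `0` when the series diverges. -/
def eval (G : Word d → ℂ) : E →L[ℂ] E := ∑' k, homPart X G k

lemma wordOp_append (α β : Word d) : wordOp X (α ++ β) = wordOp X α * wordOp X β := by
  simp [wordOp]

lemma wordOp_ofFn_cons {k : ℕ} (j : Fin d) (f : Fin k → Fin d) :
    wordOp X (List.ofFn (Fin.cons j f)) = X j * wordOp X (List.ofFn f) := by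
  simp [wordOp, List.ofFn_succ]

lemma sum_norm_adjoint_apply_sq_le (y : E) :
    ∑ j, ‖adjoint (X j) y‖ ^ 2 ≤ (rowNorm X * ‖y‖) ^ 2 := by
  have hre : ∀ j, ‖adjoint (X j) y‖ ^ 2 = RCLike.re (inner ℂ y ((X j * adjoint (X j)) y)) := by
    intro j
    rw [norm_sq_eq_re_inner (𝕜 := ℂ), ContinuousLinearMap.adjoint_inner_left]
    rfl
  calc ∑ j, ‖adjoint (X j) y‖ ^ 2
      = RCLike.re (inner ℂ y ((∑ j, X j * adjoint (X j)) y)) := by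
        simp only [hre, sum_apply, inner_sum, map_sum]
    _ ≤ ‖y‖ * ‖(∑ j, X j * adjoint (X j)) y‖ :=
        (RCLike.re_le_norm _).trans (norm_inner_le_norm _ _)
    _ ≤ ‖y‖ * (‖∑ j, X j * adjoint (X j)‖ * ‖y‖) := by
        gcongr
        exact ContinuousLinearMap.le_opNorm _ _
    _ = (rowNorm X * ‖y‖) ^ 2 := by
        rw [mul_pow, rowNorm, Real.sq_sqrt (norm_nonneg _)]
        ring

lemma sum_norm_adjoint_wordOp_apply_sq_le (k : ℕ) (x : E) :
    ∑ f : Fin k → Fin d, ‖adjoint (wordOp X (List.ofFn f)) x‖ ^ 2 ≤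
      (rowNorm X ^ k * ‖x‖) ^ 2 := by
  induction k generalizing x with
  | zero => simp [wordOp, ContinuousLinearMap.one_def, ContinuousLinearMap.adjoint_id]
  | succ k ih =>
    calc ∑ f : Fin (k + 1) → Fin d, ‖adjoint (wordOp X (List.ofFn f)) x‖ ^ 2
        = ∑ j, ∑ g : Fin k → Fin d, ‖adjoint (wordOp X (List.ofFn g)) (adjoint (X j) x)‖ ^ 2 := by
          rw [← Fintype.sum_prod_type', ← (Fin.consEquiv fun _ => Fin d).sum_comp]
          refine Fintype.sum_congr _ _ fun ⟨j, g⟩ => ?_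
          change ‖adjoint (wordOp X (List.ofFn (Fin.cons j g))) x‖ ^ 2 = _
          rw [wordOp_ofFn_cons, ← ContinuousLinearMap.star_eq_adjoint, star_mul]
          rfl
      _ ≤ ∑ j, (rowNorm X ^ k * ‖adjoint (X j) x‖) ^ 2 :=
          Finset.sum_le_sum fun j _ => ih _
      _ = rowNorm X ^ (2 * k) * ∑ j, ‖adjoint (X j) x‖ ^ 2 := by
          rw [Finset.mul_sum]
          ring_nf
      _ ≤ rowNorm X ^ (2 * k) * (rowNorm X * ‖x‖) ^ 2 :=
          mul_le_mul_of_nonneg_left (sum_norm_adjoint_apply_sq_le X x)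
            (pow_nonneg (rowNorm_nonneg X) _)
      _ = (rowNorm X ^ (k + 1) * ‖x‖) ^ 2 := by ring

/-- The row condition controls `∑ ‖X_j* y‖²` and not `∑ ‖X_j y‖²`, hence the estimate goes
through the adjoint. -/
lemma norm_homPart_le (G : Word d → ℂ) (k : ℕ) :
    ‖homPart X G k‖ ≤ √(∑ f : Fin k → Fin d, ‖G (List.ofFn f)‖ ^ 2) * rowNorm X ^ k := by
  rw [← LinearIsometryEquiv.norm_map adjoint]
  refine ContinuousLinearMap.opNorm_le_bound _
    (mul_nonneg (Real.sqrt_nonneg _) (pow_nonneg (rowNorm_nonneg X) _)) fun x => ?_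
  rw [homPart, ← ContinuousLinearMap.star_eq_adjoint, star_sum, sum_apply]
  calc ‖∑ f : Fin k → Fin d, star (G (List.ofFn f) • wordOp X (List.ofFn f)) x‖
      ≤ ∑ f : Fin k → Fin d, ‖G (List.ofFn f)‖ * ‖adjoint (wordOp X (List.ofFn f)) x‖ := by
        refine (norm_sum_le _ _).trans_eq (Finset.sum_congr rfl fun f _ => ?_)
        rw [star_smul, smul_apply, norm_smul, norm_star]
        rfl
    _ ≤ √(∑ f : Fin k → Fin d, ‖G (List.ofFn f)‖ ^ 2) *
          √(∑ f : Fin k → Fin d, ‖adjoint (wordOp X (List.ofFn f)) x‖ ^ 2) :=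
        Real.sum_mul_le_sqrt_mul_sqrt _ _ _
    _ ≤ √(∑ f : Fin k → Fin d, ‖G (List.ofFn f)‖ ^ 2) * (rowNorm X ^ k * ‖x‖) := by
        gcongr
        rw [← Real.sqrt_sq (mul_nonneg (pow_nonneg (rowNorm_nonneg X) _) (norm_nonneg x))]
        exact Real.sqrt_le_sqrt (sum_norm_adjoint_wordOp_apply_sq_le X k x)
    _ = _ := by ring

lemma norm_homPart_le_norm_mul_pow (G : Fock d) (k : ℕ) :
    ‖homPart X G k‖ ≤ ‖G‖ * rowNorm X ^ k := by
  refine (norm_homPart_le X G k).trans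
    (mul_le_mul_of_nonneg_right ?_ (pow_nonneg (rowNorm_nonneg X) _))
  rw [← Real.sqrt_sq (norm_nonneg G)]
  exact Real.sqrt_le_sqrt (sum_norm_sq_ofFn_le_norm_sq G k)

variable {X}

lemma summable_norm_homPart (hX : ‖∑ j, X j * adjoint (X j)‖ < 1) (G : Fock d) :
    Summable fun k => ‖homPart X G k‖ :=
  .of_nonneg_of_le (fun _ => norm_nonneg _) (norm_homPart_le_norm_mul_pow X G)
    ((summable_geometric_of_lt_one (rowNorm_nonneg X) (rowNorm_lt_one X hX)).mul_left ‖G‖)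

lemma norm_eval_le (hX : ‖∑ j, X j * adjoint (X j)‖ < 1) (G : Fock d) :
    ‖eval X G‖ ≤ ‖G‖ * (1 - rowNorm X)⁻¹ := by
  have hgeom := summable_geometric_of_lt_one (rowNorm_nonneg X) (rowNorm_lt_one X hX)
  calc ‖eval X G‖ ≤ ∑' k, ‖homPart X G k‖ := norm_tsum_le_tsum_norm (summable_norm_homPart hX G)
    _ ≤ ∑' k, ‖G‖ * rowNorm X ^ k :=
        (summable_norm_homPart hX G).tsum_le_tsum (norm_homPart_le_norm_mul_pow X G) (hgeom.mul_left _)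
    _ = ‖G‖ * (1 - rowNorm X)⁻¹ := by
        rw [tsum_mul_left, tsum_geometric_of_lt_one (rowNorm_nonneg X) (rowNorm_lt_one X hX)]

lemma homPart_sub (G H : Word d → ℂ) (k : ℕ) :
    homPart X (G - H) k = homPart X G k - homPart X H k := by
  simp only [homPart, Pi.sub_apply, sub_smul (M := E →L[ℂ] E), Finset.sum_sub_distrib]

lemma eval_sub (hX : ‖∑ j, X j * adjoint (X j)‖ < 1) (G H : Fock d) :
    eval X ⇑(G - H) = eval X G - eval X H := by
  simp only [eval, lp.coeFn_sub, homPart_sub]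
  exact Summable.tsum_sub (.of_norm (summable_norm_homPart hX G))
    (.of_norm (summable_norm_homPart hX H))

lemma eval_eWord_nil : eval X (eWord []) = 1 := by
  rw [eval, tsum_eq_single 0]
  · simp [homPart, eWord, wordOp]
  · intro k hk
    refine Finset.sum_eq_zero fun f _ => ?_
    simp [eWord, List.ofFn_eq_nil_iff, hk, zero_smul ℂ (A := E →L[ℂ] E)]

lemma homPart_mul_homPart (A F : Word d → ℂ) (i j : ℕ) :
    homPart X A i * homPart X F j = ∑ h : Fin (i + j) → Fin d,
      (A ((List.ofFn h).take i) * F ((List.ofFn h).drop i)) • wordOp X (List.ofFn h) := by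
  rw [homPart, homPart, Finset.sum_mul_sum, ← Fintype.sum_prod_type',
    ← (Fin.appendEquiv i j).sum_comp]
  refine Fintype.sum_congr _ _ fun ⟨f, g⟩ => ?_
  have happ : List.ofFn (Fin.appendEquiv i j (f, g)) = List.ofFn f ++ List.ofFn g :=
    List.ofFn_fin_append f g
  have hlen : (List.ofFn f).length = i := List.length_ofFn
  rw [happ, List.take_left' hlen, List.drop_left' hlen,
    wordOp_append, smul_mul_assoc, mul_smul_comm, smul_smul]

lemma homPart_cauchy (A F : Word d → ℂ) (k : ℕ) :
    homPart X (cauchy A F) k =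
      ∑ ij ∈ Finset.HasAntidiagonal.antidiagonal k, homPart X A ij.1 * homPart X F ij.2 := by
  rw [Finset.Nat.sum_antidiagonal_eq_sum_range_succ_mk, homPart]
  simp only [cauchy, List.length_ofFn, Finset.sum_smul (M := E →L[ℂ] E)]
  rw [Finset.sum_comm]
  refine Finset.sum_congr rfl fun i hi => ?_
  obtain ⟨j, rfl⟩ := Nat.exists_eq_add_of_le (Finset.mem_range_succ_iff.mp hi)
  rw [Nat.add_sub_cancel_left, homPart_mul_homPart]

lemma eval_cauchy {A F : Word d → ℂ} (hA : Summable fun k => ‖homPart X A k‖)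
    (hF : Summable fun k => ‖homPart X F k‖) : eval X (cauchy A F) = eval X A * eval X F := by
  simp only [eval, homPart_cauchy]
  exact (tsum_mul_tsum_eq_tsum_sum_antidiagonal_of_summable_norm hA hF).symm

lemma isUnit_eval_of_dist_vacuum_lt (hX : ‖∑ j, X j * adjoint (X j)‖ < 1) {G : Fock d}
    (hG : dist (vacuum d) G < 1 - rowNorm X) : IsUnit (eval X G) := by
  have hρ : 0 < 1 - rowNorm X := sub_pos.2 (rowNorm_lt_one X hX)
  have h : ‖eval X G - 1‖ < 1 := by
    rw [← eval_eWord_nil (X := X), ← coe_vacuum, ← eval_sub hX]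
    calc ‖eval X ⇑(G - vacuum d)‖ ≤ ‖G - vacuum d‖ * (1 - rowNorm X)⁻¹ := norm_eval_le hX _
      _ < 1 := by rwa [← dist_eq_norm, dist_comm, mul_inv_lt_iff₀ hρ, one_mul]
  rw [norm_sub_rev] at h
  simpa using (Units.oneSub _ h).isUnit

end Evaluation

theorem statement5_general {d : ℕ} (A : Word d → ℂ)
    (hA : IsBLM A) (houtA : IsLeftOuter A)
    (n : ℕ)
    (X : Fin d → (EuclideanSpace ℂ (Fin n) →L[ℂ] EuclideanSpace ℂ (Fin n)))
    (hX : ‖∑ j, X j * ContinuousLinearMap.adjoint (X j)‖ < 1) :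
    ∃ S : EuclideanSpace ℂ (Fin n) →L[ℂ] EuclideanSpace ℂ (Fin n),
      (Summable fun k : ℕ =>
        ‖∑ f : Fin k → Fin d, A (List.ofFn f) • wordOp X (List.ofFn f)‖) ∧
      HasSum (fun k : ℕ =>
        ∑ f : Fin k → Fin d, A (List.ofFn f) • wordOp X (List.ofFn f)) S ∧
      IsUnit S := by
  have hA2 : Memℓp A 2 := by simpa only [coe_vacuum, cauchy_eWord_nil] using hA.1 (vacuum d)
  have hsumA : Summable fun k => ‖homPart X A k‖ := summable_norm_homPart hX ⟨A, hA2⟩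
  obtain ⟨G, ⟨F, hGF⟩, hG⟩ :=
    houtA.exists_dist_lt (vacuum d) (sub_pos.2 (rowNorm_lt_one X hX))
  have hunit := isUnit_eval_of_dist_vacuum_lt hX hG
  rw [hGF, eval_cauchy hsumA (summable_norm_homPart hX F)] at hunit
  exact ⟨eval X A, hsumA, (Summable.of_norm hsumA).hasSum, isUnit_of_mul_isUnit_left hunit⟩

/-- If `A` is a left outer bounded left multiplier of `ℱ²_d`,
then for every `n ≥ 1` and every `d`-tuple `X` of `n×n` matrices (operators on
`ℂⁿ`) with `‖∑_j X_j X_j*‖ < 1`, the series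
`A(X) = ∑_{k≥0} ∑_{|α|=k} a_α X^α` converges absolutely in operator norm and
its sum is invertible.  (Words of length `k` are enumerated by functions
`Fin k → Fin d` via `List.ofFn`.) -/
theorem statement5 {d : ℕ} (hd : 0 < d) (A : Word d → ℂ)
    (hA : IsBLM A) (houtA : IsLeftOuter A)
    (n : ℕ) (hn : 0 < n)
    (X : Fin d → (EuclideanSpace ℂ (Fin n) →L[ℂ] EuclideanSpace ℂ (Fin n)))
    (hX : ‖∑ j, X j * ContinuousLinearMap.adjoint (X j)‖ < 1) :
    ∃ S : EuclideanSpace ℂ (Fin n) →L[ℂ] EuclideanSpace ℂ (Fin n),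
      (Summable fun k : ℕ =>
        ‖∑ f : Fin k → Fin d, A (List.ofFn f) • wordOp X (List.ofFn f)‖) ∧
      HasSum (fun k : ℕ =>
        ∑ f : Fin k → Fin d, A (List.ofFn f) • wordOp X (List.ofFn f)) S ∧
      IsUnit S :=
  statement5_general A hA houtA n X hX

end Smirnov
end
end

section
/- Let H be a formal free power series. If F ∈ D_H and the coefficient of F at the empty word vanishes (⟨F, ξ_∅⟩ = 0), then for each j = 1,…,d the vector R_j*F belongs to D_H and H·(R_j*F) = R_j*(H·F); i.e., the operator T_H is local. -/
noncomputable section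
open scoped ENNReal

namespace Smirnov

/-- The right creation operator `R_j` at the level of formal power series:
`R_j ξ_α = ξ_{αj}`. -/
def rshift {d : ℕ} (j : Fin d) (F : Word d → ℂ) : Word d → ℂ :=
  fun β => if β.getLast? = some j then F β.dropLast else 0

/-- The backward shift `R_j*` at the level of formal power series. -/
def rshiftAdj {d : ℕ} (j : Fin d) (F : Word d → ℂ) : Word d → ℂ :=
  fun γ => F (γ ++ [j])

theorem _root_.Memℓp.comp_injective {α β E : Type*} [NormedAddCommGroup E] {p : ℝ≥0∞}
    {f : α → E} (hf : Memℓp f p) {g : β → α} (hg : Function.Injective g) :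
    Memℓp (f ∘ g) p := by
  rcases p.trichotomy with rfl | rfl | hp
  · exact memℓp_zero ((memℓp_zero_iff.1 hf).preimage hg.injOn)
  · exact memℓp_infty
      ((memℓp_infty_iff.1 hf).mono (Set.range_comp_subset_range g fun i => ‖f i‖))
  · exact memℓp_gen (((memℓp_gen_iff hp).1 hf).comp_injective hg)

theorem memℓp_rshiftAdj {d : ℕ} (j : Fin d) {p : ℝ≥0∞} {f : Word d → ℂ} (hf : Memℓp f p) :
    Memℓp (rshiftAdj j f) p :=
  hf.comp_injective fun _ _ => List.append_cancel_right

/-- Appending `j` on the right only adds the term `H_{γj} f_∅` to the Cauchy sum at `γj`. -/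
theorem cauchy_rshiftAdj {d : ℕ} (j : Fin d) (H f : Word d → ℂ) (h0 : f [] = 0) :
    cauchy H (rshiftAdj j f) = rshiftAdj j (cauchy H f) := by
  funext γ
  simp only [cauchy, rshiftAdj, List.length_append, List.length_singleton]
  rw [Finset.sum_range_succ _ (γ.length + 1), List.drop_of_length_le (by simp), h0, mul_zero,
    add_zero]
  refine Finset.sum_congr rfl fun i hi => ?_
  have hi : i ≤ γ.length := Nat.lt_succ_iff.1 (Finset.mem_range.1 hi)
  rw [List.take_append_of_le_length hi, List.drop_append_of_le_length hi]

theorem statement7_general {d : ℕ} (H : Word d → ℂ)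
    (F : Fock d) (hF : F ∈ domH H)
    (h0 : (F : Word d → ℂ) ([] : Word d) = 0) (j : Fin d) :
    Memℓp (rshiftAdj j (F : Word d → ℂ)) 2 ∧
    Memℓp (cauchy H (rshiftAdj j (F : Word d → ℂ))) 2 ∧
    cauchy H (rshiftAdj j (F : Word d → ℂ)) = rshiftAdj j (cauchy H (F : Word d → ℂ)) := by
  have hcomm := cauchy_rshiftAdj j H (F : Word d → ℂ) h0
  exact ⟨memℓp_rshiftAdj j (lp.memℓp F), hcomm ▸ memℓp_rshiftAdj j hF, hcomm⟩

/-- If `F ∈ D_H` and the coefficient of `F` at the empty word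
vanishes, then `R_j* F ∈ D_H` and `H·(R_j* F) = R_j*(H·F)`: the operator `T_H`
is local. -/
theorem statement7 {d : ℕ} (hd : 0 < d) (H : Word d → ℂ)
    (F : Fock d) (hF : F ∈ domH H)
    (h0 : (F : Word d → ℂ) ([] : Word d) = 0) (j : Fin d) :
    Memℓp (rshiftAdj j (F : Word d → ℂ)) 2 ∧
    Memℓp (cauchy H (rshiftAdj j (F : Word d → ℂ))) 2 ∧
    cauchy H (rshiftAdj j (F : Word d → ℂ)) = rshiftAdj j (cauchy H (F : Word d → ℂ)) :=
  statement7_general H F hF h0 j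

end Smirnov
end
end
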